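/- Let ι be a finite nonempty type with cardinality K, let T ∈ ℕ, and let η > 0, β ≥ 0, γ ∈ (0, 1/2] be real numbers with (1 + β)·K·η ≤ γ. Let π : ι → ℝ satisfy π_i > 0 and Σ_i π_i = 1. Define recursively: Ĝ_{i,0} = 0; for t = 0, …, T−1, q_{t,i} = π_i·exp(η·Ĝ_{i,t}) / Σ_j π_j·exp(η·Ĝ_{j,t}), p_{t,i} = (1 − γ)·q_{t,i} + γ/K, and given estimates ĝ_{t} : ι → ℝ with 0 ≤ ĝ_{t,i} ≤ (1 + β)/p_{t,i} for all i, set Ĝ_{i,t+1} = Ĝ_{i,t} + ĝ_{t,i}. Then for every arm i*: −Σ_{t=0}^{T−1} Σ_i p_{t,i}·ĝ_{t,i} ≤ (1 + β)·η·K·(max_j Ĝ_{j,T}) − (1 − γ)·Ĝ_{i*,T} − ((1 − γ)/η)·log(π_{i*}). -/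

import Mathlib

/-!
Potential argument: with `W_t = ∑ⱼ πⱼ exp(η Ĝ_{j,t})`, one round multiplies `W_t` by
`∑ᵢ q_{t,i} exp(η ĝ_{t,i})`. Since `η ĝ_{t,i} ≤ 1`, `exp x ≤ 1 + x + x²` and `log y ≤ y - 1`
bound the log-increment by `∑ᵢ q_{t,i} (η ĝ_{t,i} + η² ĝ_{t,i}²)`; then `(1 - γ) q ≤ p` and
`p ĝ ≤ 1 + β` turn this into `η/(1-γ) (∑ᵢ p_{t,i} ĝ_{t,i} + η (1 + β) ∑ᵢ ĝ_{t,i})`.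
Telescoping from `W_0 = 1` and bounding `log W_T ≥ log π_{i*} + η Ĝ_{i*,T}` and
`∑ᵢ Ĝ_{i,T} ≤ K maxⱼ Ĝ_{j,T}` gives the inequality.
-/

open Finset

theorem Real.exp_le_one_add_add_sq {x : ℝ} (hx : |x| ≤ 1) : Real.exp x ≤ 1 + x + x ^ 2 := by
  linarith [(abs_le.mp (Real.abs_exp_sub_one_sub_id_le hx)).2]

section ExpWeights

variable {ι : Type*} [Fintype ι] (w : ι → ℝ) (η : ℝ)

noncomputable def expPotential (x : ι → ℝ) : ℝ :=
  ∑ i, w i * Real.exp (η * x i)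

noncomputable def gibbs (x : ι → ℝ) (i : ι) : ℝ :=
  w i * Real.exp (η * x i) / expPotential w η x

variable {w η}

theorem expPotential_pos [Nonempty ι] (hw : ∀ i, 0 < w i) (x : ι → ℝ) :
    0 < expPotential w η x :=
  sum_pos (fun i _ => mul_pos (hw i) (Real.exp_pos _)) univ_nonempty

theorem expPotential_zero : expPotential w η 0 = ∑ i, w i := by
  simp [expPotential]

theorem gibbs_nonneg (hw : ∀ i, 0 ≤ w i) (x : ι → ℝ) (i : ι) : 0 ≤ gibbs w η x i := by
  have hterm : ∀ j, 0 ≤ w j * Real.exp (η * x j) := fun j => mul_nonneg (hw j) (Real.exp_pos _).le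
  exact div_nonneg (hterm i) (sum_nonneg fun j _ => hterm j)

theorem sum_gibbs {x : ι → ℝ} (hx : expPotential w η x ≠ 0) : ∑ i, gibbs w η x i = 1 := by
  simp only [gibbs, ← sum_div]
  exact div_self hx

theorem expPotential_add {x : ι → ℝ} (hx : expPotential w η x ≠ 0) (y : ι → ℝ) :
    expPotential w η (x + y) = expPotential w η x * ∑ i, gibbs w η x i * Real.exp (η * y i) := by
  rw [expPotential, mul_sum]
  refine sum_congr rfl fun i _ => ?_
  rw [gibbs, Pi.add_apply, mul_add, Real.exp_add]
  field_simp

theorem log_add_mul_le_log_expPotential (hw : ∀ i, 0 < w i) (x : ι → ℝ) (i : ι) :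
    Real.log (w i) + η * x i ≤ Real.log (expPotential w η x) := by
  have hwi : 0 < w i * Real.exp (η * x i) := mul_pos (hw i) (Real.exp_pos _)
  calc Real.log (w i) + η * x i = Real.log (w i * Real.exp (η * x i)) := by
        rw [Real.log_mul (hw i).ne' (Real.exp_pos _).ne', Real.log_exp]
    _ ≤ Real.log (expPotential w η x) :=
        Real.log_le_log hwi <| single_le_sum (f := fun j => w j * Real.exp (η * x j))
          (fun j _ => (mul_pos (hw j) (Real.exp_pos _)).le) (mem_univ i)

theorem log_expPotential_add_sub_le [Nonempty ι] (hw : ∀ i, 0 < w i) (x : ι → ℝ) {y : ι → ℝ}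
    (hy : ∀ i, |η * y i| ≤ 1) :
    Real.log (expPotential w η (x + y)) - Real.log (expPotential w η x) ≤
      ∑ i, gibbs w η x i * (η * y i + (η * y i) ^ 2) := by
  have hW := expPotential_pos (η := η) hw x
  have hq := gibbs_nonneg (η := η) (fun i => (hw i).le) x
  have hS : 0 < ∑ i, gibbs w η x i * Real.exp (η * y i) := by
    have := expPotential_pos (η := η) hw (x + y)
    rw [expPotential_add hW.ne'] at this
    exact pos_of_mul_pos_right this hW.le
  rw [expPotential_add hW.ne', Real.log_mul hW.ne' hS.ne', add_sub_cancel_left]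
  calc Real.log (∑ i, gibbs w η x i * Real.exp (η * y i))
      ≤ ∑ i, gibbs w η x i * Real.exp (η * y i) - ∑ i, gibbs w η x i := by
        rw [sum_gibbs hW.ne']; exact Real.log_le_sub_one_of_pos hS
    _ = ∑ i, gibbs w η x i * (Real.exp (η * y i) - 1) := by
        rw [← sum_sub_distrib]; simp only [mul_sub, mul_one]
    _ ≤ ∑ i, gibbs w η x i * (η * y i + (η * y i) ^ 2) := by
        gcongr with i
        · exact hq i
        · linarith [Real.exp_le_one_add_add_sq (hy i)]

end ExpWeights

theorem mul_sum_mul_add_sq_le {ι : Type*} [Fintype ι] {q p g : ι → ℝ} {a η c : ℝ}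
    (hqp : ∀ i, a * q i ≤ p i) (hη : 0 ≤ η) (hg : ∀ i, 0 ≤ g i) (hpg : ∀ i, p i * g i ≤ c) :
    a * ∑ i, q i * (η * g i + (η * g i) ^ 2) ≤ η * (∑ i, p i * g i + η * c * ∑ i, g i) := by
  simp only [mul_sum, ← sum_add_distrib]
  refine sum_le_sum fun i _ => ?_
  have h1 := mul_le_mul_of_nonneg_right (hqp i) (mul_nonneg hη (hg i))
  have h2 := mul_le_mul_of_nonneg_right (hqp i) (mul_nonneg (sq_nonneg η) (sq_nonneg (g i)))
  have h3 := mul_le_mul_of_nonneg_left (hpg i) (mul_nonneg (sq_nonneg η) (hg i))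
  nlinarith

theorem mul_le_one_of_le_div {p m c g η : ℝ} (hm : 0 < m) (hmp : m ≤ p) (hc : 0 ≤ c)
    (hg : g ≤ c / p) (hη : 0 ≤ η) (hcη : c * η ≤ m) : η * g ≤ 1 := by
  calc η * g ≤ η * (c / m) :=
        mul_le_mul_of_nonneg_left (hg.trans (div_le_div_of_nonneg_left hc hm hmp)) hη
    _ = c * η / m := by ring
    _ ≤ 1 := (div_le_one hm).mpr hcη

theorem exp3p_round_log_expPotential_le {ι : Type*} [Fintype ι] [Nonempty ι] {w : ι → ℝ}
    {η β γ K : ℝ} (hw : ∀ i, 0 < w i) (hη : 0 ≤ η) (hβ : 0 ≤ β) (hγ0 : 0 < γ) (hγ1 : γ ≤ 1)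
    (hK : 0 < K) (hcond : (1 + β) * K * η ≤ γ) (x : ι → ℝ) {p g : ι → ℝ}
    (hp : ∀ i, p i = (1 - γ) * gibbs w η x i + γ / K)
    (hg : ∀ i, 0 ≤ g i ∧ g i ≤ (1 + β) / p i) :
    (1 - γ) * (Real.log (expPotential w η (x + g)) - Real.log (expPotential w η x)) ≤
      η * (∑ i, p i * g i + η * (1 + β) * ∑ i, g i) := by
  have hm : 0 < γ / K := div_pos hγ0 hK
  have hq := gibbs_nonneg (η := η) (fun i => (hw i).le) x
  have hqp : ∀ i, (1 - γ) * gibbs w η x i ≤ p i := fun i => by rw [hp]; linarith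
  have hmp : ∀ i, γ / K ≤ p i := fun i => by
    rw [hp]; linarith [mul_nonneg (sub_nonneg.mpr hγ1) (hq i)]
  have hpg : ∀ i, p i * g i ≤ 1 + β := fun i => by
    rw [mul_comm, ← le_div_iff₀ (hm.trans_le (hmp i))]; exact (hg i).2
  have hcη : (1 + β) * η ≤ γ / K := by rw [le_div_iff₀ hK]; linarith
  have hηg : ∀ i, |η * g i| ≤ 1 := fun i => abs_le.mpr
    ⟨by nlinarith [(hg i).1], mul_le_one_of_le_div hm (hmp i) (by linarith) (hg i).2 hη hcη⟩
  calc _ ≤ (1 - γ) * ∑ i, gibbs w η x i * (η * g i + (η * g i) ^ 2) :=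
        mul_le_mul_of_nonneg_left (log_expPotential_add_sub_le hw x hηg) (by linarith)
    _ ≤ _ := mul_sum_mul_add_sq_le hqp hη (fun i => (hg i).1) hpg

theorem exp3p_log_expPotential_le {ι : Type*} [Fintype ι] [Nonempty ι] {w : ι → ℝ}
    {η β γ K : ℝ} (hw : ∀ i, 0 < w i) (hw1 : ∑ i, w i = 1) (hη : 0 ≤ η) (hβ : 0 ≤ β)
    (hγ0 : 0 < γ) (hγ1 : γ ≤ 1) (hK : 0 < K) (hcond : (1 + β) * K * η ≤ γ) (T : ℕ)
    {G p g : ℕ → ι → ℝ} (hG0 : ∀ i, G 0 i = 0) (hGsucc : ∀ t i, G (t + 1) i = G t i + g t i)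
    (hp : ∀ t i, p t i = (1 - γ) * gibbs w η (G t) i + γ / K)
    (hg : ∀ t, t < T → ∀ i, 0 ≤ g t i ∧ g t i ≤ (1 + β) / p t i) :
    (1 - γ) * Real.log (expPotential w η (G T)) ≤
      η * (∑ t ∈ range T, ∑ i, p t i * g t i + η * (1 + β) * ∑ i, G T i) := by
  set L : ℕ → ℝ := fun t => Real.log (expPotential w η (G t))
  have hround : ∀ t ∈ range T, (1 - γ) * (L (t + 1) - L t) ≤
      η * (∑ i, p t i * g t i + η * (1 + β) * ∑ i, g t i) := fun t ht => by
    simp only [L, show G (t + 1) = G t + g t from funext (hGsucc t)]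
    exact exp3p_round_log_expPotential_le hw hη hβ hγ0 hγ1 hK hcond (G t) (hp t)
      (hg t (mem_range.mp ht))
  have hL0 : L 0 = 0 := by
    simp [L, show G 0 = 0 from funext hG0, expPotential_zero, hw1]
  have hgG : ∑ t ∈ range T, ∑ i, g t i = ∑ i, G T i := by
    rw [sum_comm]
    refine sum_congr rfl fun i _ => ?_
    simp only [show ∀ t, g t i = G (t + 1) i - G t i from fun t => by rw [hGsucc]; ring,
      sum_range_sub (fun t => G t i), hG0, sub_zero]
  have := sum_le_sum hround
  rwa [← mul_sum, sum_range_sub L, hL0, sub_zero, ← mul_sum, sum_add_distrib, ← mul_sum,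
    hgG] at this

/-- Let `ι` be a finite nonempty type of cardinality `K`, `T ∈ ℕ`,
and `η > 0`, `β ≥ 0`, `γ ∈ (0, 1/2]` with `(1 + β) K η ≤ γ`. Let `π : ι → ℝ` be a
strictly positive distribution. Define recursively `Ĝ_{i,0} = 0`; for each `t < T`,
`q_{t,i} = π_i exp(η Ĝ_{i,t}) / ∑_j π_j exp(η Ĝ_{j,t})`,
`p_{t,i} = (1 − γ) q_{t,i} + γ/K`, and, given estimates `ĝ_t` with
`0 ≤ ĝ_{t,i} ≤ (1 + β)/p_{t,i}`, `Ĝ_{i,t+1} = Ĝ_{i,t} + ĝ_{t,i}`. Then for every arm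
`i*`:
`−∑_{t<T} ∑_i p_{t,i} ĝ_{t,i} ≤ (1 + β) η K (max_j Ĝ_{j,T}) − (1 − γ) Ĝ_{i*,T}
  − ((1 − γ)/η) log π_{i*}`. -/
theorem exp3p_cumulative_potential_inequality
    {ι : Type*} [Fintype ι] [Nonempty ι]
    (K : ℝ) (hK : K = (Fintype.card ι : ℝ))
    (T : ℕ) (η β γ : ℝ)
    (hη : 0 < η) (hβ : 0 ≤ β) (hγ0 : 0 < γ) (hγ1 : γ ≤ 1 / 2)
    (hcond : (1 + β) * K * η ≤ γ)
    (π : ι → ℝ) (hπ0 : ∀ i, 0 < π i) (hπ1 : ∑ i, π i = 1)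
    (G : ℕ → ι → ℝ) (q p ghat : ℕ → ι → ℝ)
    (hG0 : ∀ i, G 0 i = 0)
    (hq : ∀ t i, q t i =
      π i * Real.exp (η * G t i) / ∑ j, π j * Real.exp (η * G t j))
    (hp : ∀ t i, p t i = (1 - γ) * q t i + γ / K)
    (hghat : ∀ t, t < T → ∀ i, 0 ≤ ghat t i ∧ ghat t i ≤ (1 + β) / p t i)
    (hGrec : ∀ t i, G (t + 1) i = G t i + ghat t i) :
    ∀ istar : ι,
      -∑ t ∈ Finset.range T, ∑ i, p t i * ghat t i ≤
        (1 + β) * η * K * (⨆ j, G T j) - (1 - γ) * G T istar -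
          ((1 - γ) / η) * Real.log (π istar) := by
  intro istar
  have hKpos : 0 < K := by rw [hK]; exact_mod_cast Fintype.card_pos
  have htel := exp3p_log_expPotential_le hπ0 hπ1 hη.le hβ hγ0 (by linarith) hKpos hcond T hG0
    hGrec (fun t i => (hp t i).trans (by rw [hq]; rfl)) hghat
  have hlow : Real.log (π istar) + η * G T istar ≤ Real.log (expPotential π η (G T)) :=
    log_add_mul_le_log_expPotential hπ0 (G T) istar
  have hsum : ∑ i, G T i ≤ K * ⨆ j, G T j := by
    calc ∑ i, G T i ≤ ∑ _i : ι, ⨆ j, G T j :=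
          sum_le_sum fun i _ => le_ciSup (Set.finite_range (G T)).bddAbove i
      _ = K * ⨆ j, G T j := by simp [hK]
  have hbound : (1 - γ) * (Real.log (π istar) + η * G T istar) ≤
      η * (∑ t ∈ range T, ∑ i, p t i * ghat t i + η * (1 + β) * (K * ⨆ j, G T j)) :=
    calc _ ≤ (1 - γ) * Real.log (expPotential π η (G T)) :=
          mul_le_mul_of_nonneg_left hlow (by linarith)
      _ ≤ _ := htel.trans (by gcongr)
  rw [← sub_nonneg]
  refine (div_nonneg (sub_nonneg.mpr hbound) hη.le).trans_eq ?_
  field_simp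
  ring
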